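/- arXiv:math/0612304 — 4 statements merged into one kernel-verified Lean document; each statement's English description precedes it below -/
import Mathlib

section
/- For a 3-form T in dimension n = 3 or 4, the square of T inside the Clifford algebra acts as the scalar ||T||², where ||T||² = (1/6)·Σ_{i,j} ||T(e_i,e_j)||² for an orthonormal basis e_1,...,e_n. -/
open CliffordAlgebra

/-- The negative definite quadratic form on ℝⁿ, so that in the Clifford algebra
`ι v * ι v = -‖v‖²` and the standard basis vectors satisfy `eᵢ² = -1`. -/
noncomputable def Qneg (n : ℕ) : QuadraticForm ℝ (Fin n → ℝ) :=
  QuadraticMap.weightedSumSquares ℝ (fun _ : Fin n => (-1 : ℝ))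

-- aux lemmas
lemma Qneg_single (n : ℕ) (i : Fin n) : Qneg n (Pi.single i 1) = -1 := by
  simp [Qneg, QuadraticMap.weightedSumSquares_apply, Pi.single_apply]

lemma polar_single (n : ℕ) (i j : Fin n) (h : i ≠ j) :
    QuadraticMap.polar (Qneg n) (Pi.single i 1) (Pi.single j 1) = 0 := by
  simp only [QuadraticMap.polar, Qneg, QuadraticMap.weightedSumSquares_apply, Pi.add_apply,
    Pi.single_apply]
  rw [← Finset.sum_sub_distrib, ← Finset.sum_sub_distrib]
  apply Finset.sum_eq_zero
  intro k _
  rcases eq_or_ne k i with rfl|hi <;> rcases eq_or_ne k j with rfl|hj <;> simp_all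

lemma e_sq (n : ℕ) (i : Fin n) :
    ι (Qneg n) (Pi.single i 1) * ι (Qneg n) (Pi.single i 1) = -1 := by
  rw [ι_sq_scalar, Qneg_single, map_neg, map_one]

lemma e_swap (n : ℕ) {i j : Fin n} (h : i ≠ j) :
    ι (Qneg n) (Pi.single j 1) * ι (Qneg n) (Pi.single i 1)
      = -(ι (Qneg n) (Pi.single i 1) * ι (Qneg n) (Pi.single j 1)) := by
  have := ι_mul_ι_add_swap (Q := Qneg n) (Pi.single i 1) (Pi.single j 1)
  rw [polar_single n i j h, map_zero] at this
  have h2 := this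
  rw [add_comm] at h2
  exact eq_neg_of_add_eq_zero_left h2

lemma e_sq' (n : ℕ) (i : Fin n) (x : CliffordAlgebra (Qneg n)) :
    ι (Qneg n) (Pi.single i 1) * (ι (Qneg n) (Pi.single i 1) * x) = -x := by
  rw [← mul_assoc, e_sq, neg_one_mul]

lemma e_swap' (n : ℕ) {i j : Fin n} (h : i ≠ j) (x : CliffordAlgebra (Qneg n)) :
    ι (Qneg n) (Pi.single j 1) * (ι (Qneg n) (Pi.single i 1) * x)
      = -(ι (Qneg n) (Pi.single i 1) * (ι (Qneg n) (Pi.single j 1) * x)) := by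
  rw [← mul_assoc, e_swap n h, neg_mul, mul_assoc]

set_option maxHeartbeats 4000000 in
/-- in dimension n = 3 or 4, the Clifford square of a 3-form T is the
scalar ‖T‖² = (1/6)·Σ_{i,j} ‖T(eᵢ,eⱼ)‖².  The 3-form is encoded by its alternating
coefficients `t i j k` in the orthonormal basis `eᵢ = Pi.single i 1`, so that
`T = Σ_{i<j<k} t i j k eᵢeⱼe_k = (1/6)Σ_{i,j,k} t i j k eᵢeⱼe_k` and
‖T(eᵢ,eⱼ)‖² = Σ_k (t i j k)². -/
theorem stmt_0 (n : ℕ) (hn : n = 3 ∨ n = 4)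
    (t : Fin n → Fin n → Fin n → ℝ)
    (halt1 : ∀ i j k, t i j k = - t j i k)
    (halt2 : ∀ i j k, t i j k = - t i k j)
    (T : CliffordAlgebra (Qneg n))
    (hT : T = (1/6 : ℝ) • ∑ i, ∑ j, ∑ k, t i j k •
      (ι (Qneg n) (Pi.single i 1) * ι (Qneg n) (Pi.single j 1) *
        ι (Qneg n) (Pi.single k 1))) :
    T * T = algebraMap ℝ (CliffordAlgebra (Qneg n))
      ((1/6) * ∑ i, ∑ j, ∑ k, (t i j k)^2) := by
  rcases hn with rfl | rfl
  ·
      have hz1 : ∀ i j, t i i j = 0 := fun i j => by have := halt1 i i j; linarith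
      have hz2 : ∀ i j, t i j j = 0 := fun i j => by have := halt2 i j j; linarith
      have hz3 : ∀ i j, t i j i = 0 := fun i j => by
        have h := halt2 i j i; rw [hz1] at h; simpa using h
      have hA : ∀ i j k, t i k j = - t i j k := fun i j k => halt2 i k j
      have hB : ∀ i j k, t j i k = - t i j k := fun i j k => halt1 j i k
      have hC : ∀ i j k, t j k i = t i j k := fun i j k => by
        rw [halt2 j k i, halt1 j i k, neg_neg]
      have hD : ∀ i j k, t k i j = t i j k := fun i j k => by
        rw [halt1 k i j, halt2 i k j, neg_neg]
      have hE : ∀ i j k, t k j i = - t i j k := fun i j k => by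
        rw [halt1 k j i, hC]
      have sw01 := e_swap' 3 (show (0:Fin 3) ≠ 1 by decide)
      have sw02 := e_swap' 3 (show (0:Fin 3) ≠ 2 by decide)
      have sw12 := e_swap' 3 (show (1:Fin 3) ≠ 2 by decide)
      have sw01' := e_swap 3 (show (0:Fin 3) ≠ 1 by decide)
      have sw02' := e_swap 3 (show (0:Fin 3) ≠ 2 by decide)
      have sw12' := e_swap 3 (show (1:Fin 3) ≠ 2 by decide)
      subst hT
      rw [Algebra.algebraMap_eq_smul_one]
      simp only [Fin.sum_univ_three, hz1, hz2, hz3,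
        hA 0 1 2, hB 0 1 2, hC 0 1 2, hD 0 1 2, hE 0 1 2]
      simp only [mul_assoc, zero_smul, add_zero, zero_add, neg_smul, smul_add, smul_neg,
        smul_smul, mul_add, add_mul, mul_zero, zero_mul, smul_zero, neg_zero, mul_neg, neg_mul, neg_neg,
        smul_mul_assoc, mul_smul_comm,
        sw01, sw02, sw12, sw01', sw02', sw12', e_sq, e_sq' 3, mul_one, mul_neg_one]
      match_scalars <;> ring
  ·
      have hz1 : ∀ i j, t i i j = 0 := fun i j => by have := halt1 i i j; linarith
      have hz2 : ∀ i j, t i j j = 0 := fun i j => by have := halt2 i j j; linarith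
      have hz3 : ∀ i j, t i j i = 0 := fun i j => by
        have h := halt2 i j i; rw [hz1] at h; simpa using h
      have hA : ∀ i j k, t i k j = - t i j k := fun i j k => halt2 i k j
      have hB : ∀ i j k, t j i k = - t i j k := fun i j k => halt1 j i k
      have hC : ∀ i j k, t j k i = t i j k := fun i j k => by
        rw [halt2 j k i, halt1 j i k, neg_neg]
      have hD : ∀ i j k, t k i j = t i j k := fun i j k => by
        rw [halt1 k i j, halt2 i k j, neg_neg]
      have hE : ∀ i j k, t k j i = - t i j k := fun i j k => by
        rw [halt1 k j i, hC]
      have sw01 := e_swap' 4 (show (0:Fin 4) ≠ 1 by decide)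
      have sw02 := e_swap' 4 (show (0:Fin 4) ≠ 2 by decide)
      have sw03 := e_swap' 4 (show (0:Fin 4) ≠ 3 by decide)
      have sw12 := e_swap' 4 (show (1:Fin 4) ≠ 2 by decide)
      have sw13 := e_swap' 4 (show (1:Fin 4) ≠ 3 by decide)
      have sw23 := e_swap' 4 (show (2:Fin 4) ≠ 3 by decide)
      have sw01' := e_swap 4 (show (0:Fin 4) ≠ 1 by decide)
      have sw02' := e_swap 4 (show (0:Fin 4) ≠ 2 by decide)
      have sw03' := e_swap 4 (show (0:Fin 4) ≠ 3 by decide)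
      have sw12' := e_swap 4 (show (1:Fin 4) ≠ 2 by decide)
      have sw13' := e_swap 4 (show (1:Fin 4) ≠ 3 by decide)
      have sw23' := e_swap 4 (show (2:Fin 4) ≠ 3 by decide)
      subst hT
      rw [Algebra.algebraMap_eq_smul_one]
      simp only [Fin.sum_univ_four, hz1, hz2, hz3,
        hA 0 1 2, hB 0 1 2, hC 0 1 2, hD 0 1 2, hE 0 1 2,
        hA 0 1 3, hB 0 1 3, hC 0 1 3, hD 0 1 3, hE 0 1 3,
        hA 0 2 3, hB 0 2 3, hC 0 2 3, hD 0 2 3, hE 0 2 3,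
        hA 1 2 3, hB 1 2 3, hC 1 2 3, hD 1 2 3, hE 1 2 3]
      simp only [mul_assoc, zero_smul, add_zero, zero_add, neg_smul, smul_add, smul_neg,
        smul_smul, mul_add, add_mul, mul_zero, zero_mul, smul_zero, neg_zero, mul_neg, neg_mul, neg_neg,
        smul_mul_assoc, mul_smul_comm,
        sw01, sw02, sw03, sw12, sw13, sw23, sw01', sw02', sw03', sw12', sw13', sw23',
        e_sq, e_sq' 4, mul_one, mul_neg_one]
      match_scalars <;> ring
end

section
/- Suppose a symmetric endomorphism T of a spinor module has eigenvalues μ and the spinor module splits as ⊕_μ Σ_μ. Let S = P(T) be a polynomial in T, Σ_{μ₀} a fixed eigenbundle, and μ₁,...,μ_k the eigenvalues such that Clifford multiplication maps TM·Σ_{μ₀} into Σ_{μ₁} ⊕ ... ⊕ Σ_{μ_k}. Then the modified connection ∇^S_X ψ := ∇_X ψ − (1/2)(X·S + S·X)·ψ preserves the subbundle Σ_{μ₀} if and only if (P(μ₀) + P(μ_i))·μ_i = (P(μ₀) + P(μ_i))·μ₀ for all 1 ≤ i ≤ k. -/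
open Finset

/-- the deformed connection ∇^S, S = P(T), preserves the eigenbundle
Σ_{μ₀} of the parallel symmetric endomorphism T if and only if
(P(μ₀) + P(μᵢ))·μᵢ = (P(μ₀) + P(μᵢ))·μ₀ for all i.

Here `Sig ν` is the ν-eigenbundle of T, `c X` is Clifford multiplication by the
tangent vector X, `π i` is the projection onto `Sig (μ i)`, the eigenvalues
μ 1, …, μ k are exactly those (pairwise distinct, realized by `hmin`) for which
TM·Σ_{μ₀} ⊂ Σ_{μ 1} ⊕ ⋯ ⊕ Σ_{μ k}, the connection ∇ preserves each eigenbundle,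
and S acts on `Sig ν` by the scalar P(ν). -/
theorem stmt_4 {V H : Type*} [AddCommGroup H] [Module ℂ H]
    (c : V → (H →ₗ[ℂ] H)) (Sig : ℝ → Submodule ℂ H)
    (μ₀ : ℝ) (k : ℕ) (μ : Fin k → ℝ) (hμinj : Function.Injective μ)
    (π : Fin k → (H →ₗ[ℂ] H))
    (hπmem : ∀ i (v : H), π i v ∈ Sig (μ i))
    (hπid : ∀ i, ∀ v ∈ Sig (μ i), π i v = v)
    (hπorth : ∀ i (ν : ℝ), ν ≠ μ i → ∀ v ∈ Sig ν, π i v = 0)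
    (hdecomp : ∀ (X : V), ∀ ψ ∈ Sig μ₀, c X ψ = ∑ i, π i (c X ψ))
    (hmin : ∀ i, ∃ (X : V) (ψ : H), ψ ∈ Sig μ₀ ∧ π i (c X ψ) ≠ 0)
    (P : Polynomial ℝ) (S : H →ₗ[ℂ] H)
    (hS : ∀ (ν : ℝ), ∀ v ∈ Sig ν, S v = ((P.eval ν : ℝ) : ℂ) • v)
    (nab : V → H → H)
    (hnab : ∀ (X : V) (ν : ℝ), ∀ v ∈ Sig ν, nab X v ∈ Sig ν)
    (nabS : V → H → H)
    (hnabS : ∀ (X : V) (ψ : H),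
      nabS X ψ = nab X ψ - (1/2 : ℂ) • ((c X ∘ₗ S + S ∘ₗ c X) ψ)) :
    (∀ (X : V), ∀ ψ ∈ Sig μ₀, nabS X ψ ∈ Sig μ₀)
      ↔ ∀ i, (P.eval μ₀ + P.eval (μ i)) * μ i
          = (P.eval μ₀ + P.eval (μ i)) * μ₀ := by
  have key : ∀ (X : V), ∀ ψ ∈ Sig μ₀, nabS X ψ
      = nab X ψ - ∑ i, ((((P.eval μ₀ + P.eval (μ i)) / 2 : ℝ) : ℂ))
          • π i (c X ψ) := by
    intro X ψ hψ
    rw [hnabS]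
    congr 1
    obtain ⟨u, hu⟩ : ∃ u : Fin k → H, ∀ i, π i (c X ψ) = u i := ⟨_, fun i => rfl⟩
    have h2 : c X ψ = ∑ i, u i := by
      rw [hdecomp X ψ hψ]; exact Finset.sum_congr rfl fun i _ => hu i
    have h3 : S (c X ψ) = ∑ i, ((P.eval (μ i) : ℝ) : ℂ) • u i := by
      conv_lhs => rw [hdecomp X ψ hψ, map_sum]
      exact Finset.sum_congr rfl fun i _ => by rw [hS (μ i) _ (hπmem i _), hu i]
    have h1 : c X (S ψ) = ((P.eval μ₀ : ℝ) : ℂ) • c X ψ := by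
      rw [hS μ₀ ψ hψ, map_smul]
    simp only [LinearMap.add_apply, LinearMap.comp_apply, h1, h3, hu]
    rw [h2, smul_add, Finset.smul_sum, Finset.smul_sum, Finset.smul_sum,
      ← Finset.sum_add_distrib]
    refine Finset.sum_congr rfl fun i _ => ?_
    rw [smul_smul, smul_smul, ← add_smul]
    congr 1
    push_cast
    ring
  constructor
  · intro hpres i
    rcases eq_or_ne (μ i) μ₀ with hi | hi
    · rw [hi]
    rcases hmin i with ⟨X, ψ, hψ, hne⟩
    have hmem : (∑ j, ((((P.eval μ₀ + P.eval (μ j)) / 2 : ℝ) : ℂ))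
        • π j (c X ψ)) ∈ Sig μ₀ := by
      have := Submodule.sub_mem _ (hnab X μ₀ ψ hψ) (hpres X ψ hψ)
      rwa [key X ψ hψ, sub_sub_cancel] at this
    have hπi : π i (∑ j, ((((P.eval μ₀ + P.eval (μ j)) / 2 : ℝ) : ℂ))
        • π j (c X ψ)) = 0 := hπorth i μ₀ (fun h => hi h.symm) _ hmem
    rw [map_sum] at hπi
    have hsum : ∀ j, π i ((((P.eval μ₀ + P.eval (μ j)) / 2 : ℝ) : ℂ)
        • π j (c X ψ)) = if j = i then
          (((P.eval μ₀ + P.eval (μ i)) / 2 : ℝ) : ℂ) • π i (c X ψ) else 0 := by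
      intro j
      rw [map_smul]
      by_cases hji : j = i
      · subst hji; rw [hπid j _ (hπmem j _)]; simp
      · rw [hπorth i (μ j) (fun h => hji (hμinj h)) _ (hπmem j _), smul_zero,
          if_neg hji]
    rw [Finset.sum_congr rfl (fun j _ => hsum j), Finset.sum_ite_eq'] at hπi
    simp only [Finset.mem_univ, if_true] at hπi
    rcases smul_eq_zero.mp hπi with hc | hc
    · have h2 : ((P.eval μ₀ + P.eval (μ i)) / 2 : ℝ) = 0 := by exact_mod_cast hc
      have h0 : P.eval μ₀ + P.eval (μ i) = 0 := by linarith
      rw [h0]; ring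
    · exact absurd hc hne
  · intro hcond X ψ hψ
    rw [key X ψ hψ]
    refine Submodule.sub_mem _ (hnab X μ₀ ψ hψ) (Submodule.sum_mem _ ?_)
    intro i _
    rcases eq_or_ne (μ i) μ₀ with hi | hi
    · exact Submodule.smul_mem _ _ (hi ▸ hπmem i _)
    · have h0 : P.eval μ₀ + P.eval (μ i) = 0 := by
        rcases mul_eq_zero.mp (show (P.eval μ₀ + P.eval (μ i)) * (μ i - μ₀) = 0
          by linear_combination hcond i) with h | h
        · exact h
        · exact absurd (by linarith : μ i = μ₀) hi
      have hz : (((P.eval μ₀ + P.eval (μ i)) / 2 : ℝ) : ℂ) = 0 := by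
        rw [h0]; norm_num
      rw [hz, zero_smul]
      exact Submodule.zero_mem _
end

section
/- Let S = a₀·Id + a₁·T act on a spinor ψ in the eigenspace Σ_± = {ψ : T·ψ = ±||T||·ψ} of a 3-form T in dimension 4 with T proportional to e₁∧e₂∧e₃. Then Σ_{i=1}^{4} ||(e_i·S + S·e_i)ψ||² = 4[3(a₀ ± a₁||T||)² + a₀²]·||ψ||². -/
/-
T = t e₁e₂e₃ commutes with e₁, e₂, e₃ (each anticommutes with the other
two factors) and anticommutes with e₄. Hence on an eigenvector ψ of T with eigenvalue λ = ±|t|,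
the anticommutator eᵢS + Seᵢ acts as 2(a₀ + a₁λ)eᵢ for i ≤ 3 and as 2a₀e₄. Since each eᵢ is
skew-adjoint with eᵢ² = -1, it is an isometry, and the sum of squared norms is
3·4(a₀ + a₁λ)²‖ψ‖² + 4a₀²‖ψ‖².
-/

section CliffordRelations

variable {K M ι : Type*} [CommRing K] [AddCommGroup M] [Module K M] [DecidableEq ι]

def IsCliffordFamily (c : ι → M →ₗ[K] M) : Prop :=
  ∀ i j, c i ∘ₗ c j + c j ∘ₗ c i = if i = j then (-2 : K) • LinearMap.id else 0

namespace IsCliffordFamily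

variable {c : ι → M →ₗ[K] M}

theorem apply_apply_of_ne (hc : IsCliffordFamily c) {i j : ι} (hij : i ≠ j) (x : M) :
    c i (c j x) = -c j (c i x) := by
  have h := LinearMap.congr_fun (hc i j) x
  rw [if_neg hij] at h
  exact eq_neg_of_add_eq_zero_left h

theorem apply_apply_self (hc : IsCliffordFamily c) (h2 : IsSMulRegular M (2 : K)) (i : ι)
    (x : M) : c i (c i x) = -x := by
  have h := LinearMap.congr_fun (hc i i) x
  rw [if_pos rfl] at h
  simp only [LinearMap.comp_apply, LinearMap.smul_apply, ← two_smul K, neg_smul,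
    ← smul_neg] at h
  exact h2 h

theorem triple_apply_apply_of_mem (hc : IsCliffordFamily c) {i j k l : ι} (hij : i ≠ j)
    (hik : i ≠ k) (hjk : j ≠ k) (hl : l = i ∨ l = j ∨ l = k) (x : M) :
    c i (c j (c k (c l x))) = c l (c i (c j (c k x))) := by
  rcases hl with rfl | rfl | rfl
  · rw [hc.apply_apply_of_ne hik.symm, map_neg, hc.apply_apply_of_ne hij.symm, map_neg,
      map_neg, neg_neg]
  · rw [hc.apply_apply_of_ne hjk.symm, hc.apply_apply_of_ne hij.symm, map_neg, map_neg]
  · rw [hc.apply_apply_of_ne hik.symm, hc.apply_apply_of_ne hjk.symm, map_neg, neg_neg]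

theorem triple_apply_apply_of_not_mem (hc : IsCliffordFamily c) {i j k l : ι} (hli : l ≠ i)
    (hlj : l ≠ j) (hlk : l ≠ k) (x : M) :
    c i (c j (c k (c l x))) = -c l (c i (c j (c k x))) := by
  simp only [hc.apply_apply_of_ne hlk.symm, hc.apply_apply_of_ne hlj.symm,
    hc.apply_apply_of_ne hli.symm, map_neg, neg_neg]

end IsCliffordFamily

end CliffordRelations

section Anticommutator

variable {K M : Type*} [CommRing K] [AddCommGroup M] [Module K M]

theorem anticommutator_apply_of_commute {e T : M →ₗ[K] M} (hT : ∀ x, T (e x) = e (T x))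
    (a b : K) {μ : K} {ψ : M} (hψ : T ψ = μ • ψ) :
    (e ∘ₗ (a • LinearMap.id + b • T) + (a • LinearMap.id + b • T) ∘ₗ e : M →ₗ[K] M) ψ
      = (2 * (a + b * μ)) • e ψ := by
  simp only [LinearMap.add_apply, LinearMap.comp_apply, LinearMap.smul_apply,
    LinearMap.id_apply, map_add, map_smul, hT, hψ]
  module

theorem anticommutator_apply_of_anticommute {e T : M →ₗ[K] M} (hT : ∀ x, T (e x) = -e (T x))
    (a b : K) (ψ : M) :
    (e ∘ₗ (a • LinearMap.id + b • T) + (a • LinearMap.id + b • T) ∘ₗ e : M →ₗ[K] M) ψ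
      = (2 * a) • e ψ := by
  simp only [LinearMap.add_apply, LinearMap.comp_apply, LinearMap.smul_apply,
    LinearMap.id_apply, map_add, map_smul, hT]
  module

end Anticommutator

theorem LinearMap.norm_apply_eq_of_skew {𝕜 E : Type*} [RCLike 𝕜] [NormedAddCommGroup E]
    [InnerProductSpace 𝕜 E] {A : E →ₗ[𝕜] E} (hsq : ∀ x, A (A x) = -x)
    (hskew : ∀ x y, inner 𝕜 (A x) y = -inner 𝕜 x (A y)) (x : E) : ‖A x‖ = ‖x‖ := by
  have h : ‖A x‖ ^ 2 = ‖x‖ ^ 2 := by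
    rw [@norm_sq_eq_re_inner 𝕜, @norm_sq_eq_re_inner 𝕜, hskew, hsq, inner_neg_right, neg_neg]
  exact (pow_left_inj₀ (norm_nonneg _) (norm_nonneg _) two_ne_zero).1 h

theorem stmt_6_general {H : Type*} [NormedAddCommGroup H] [InnerProductSpace ℂ H]
    (c : Fin 4 → (H →ₗ[ℂ] H))
    (hrel : ∀ i j : Fin 4, c i ∘ₗ c j + c j ∘ₗ c i
      = if i = j then (-2 : ℂ) • (LinearMap.id : H →ₗ[ℂ] H) else 0)
    (hskew : ∀ (i : Fin 4) (φ ψ : H), (inner ℂ (c i φ) ψ : ℂ) = -(inner ℂ φ (c i ψ) : ℂ))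
    (t a₀ a₁ : ℝ) (Top S : H →ₗ[ℂ] H)
    (hTop : Top = ((t : ℝ) : ℂ) • (c 0 ∘ₗ c 1 ∘ₗ c 2))
    (hS : S = ((a₀ : ℝ) : ℂ) • (LinearMap.id : H →ₗ[ℂ] H) + ((a₁ : ℝ) : ℂ) • Top)
    (ε : ℝ)
    (ψ : H) (hψ : Top ψ = ((ε * |t| : ℝ) : ℂ) • ψ) :
    ∑ i : Fin 4, ‖(c i ∘ₗ S + S ∘ₗ c i) ψ‖^2
      = 4 * (3 * (a₀ + ε * a₁ * |t|)^2 + a₀^2) * ‖ψ‖^2 := by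
  have hc : IsCliffordFamily c := hrel
  have hcomm : ∀ l, l = 0 ∨ l = 1 ∨ l = 2 → ∀ x, Top (c l x) = c l (Top x) := fun l hl x => by
    simp only [hTop, LinearMap.smul_apply, LinearMap.comp_apply, map_smul,
      hc.triple_apply_apply_of_mem (by decide) (by decide) (by decide) hl]
  have hanticomm : ∀ x, Top (c 3 x) = -c 3 (Top x) := fun x => by
    simp only [hTop, LinearMap.smul_apply, LinearMap.comp_apply, map_smul, smul_neg,
      hc.triple_apply_apply_of_not_mem (i := 0) (j := 1) (k := 2) (l := 3) (by decide)
        (by decide) (by decide)]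
  have hnorm : ∀ i x, ‖c i x‖ = ‖x‖ := fun i =>
    LinearMap.norm_apply_eq_of_skew (hc.apply_apply_self (.of_ne_zero two_ne_zero) i) (hskew i)
  subst hS
  rw [Fin.sum_univ_four, anticommutator_apply_of_commute (hcomm 0 (by simp)) _ _ hψ,
    anticommutator_apply_of_commute (hcomm 1 (by simp)) _ _ hψ,
    anticommutator_apply_of_commute (hcomm 2 (by simp)) _ _ hψ,
    anticommutator_apply_of_anticommute hanticomm]
  simp only [norm_smul, hnorm]
  norm_cast
  simp only [Real.norm_eq_abs, mul_pow, sq_abs]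
  ring

/-- on a module over Cl(4) with skew-adjoint Clifford multiplication,
for T = t·e₁e₂e₃, S = a₀·Id + a₁·T and a spinor ψ with T·ψ = ±‖T‖·ψ (‖T‖ = |t|),
one has Σ_{i=1}^{4} ‖(eᵢ·S + S·eᵢ)ψ‖² = 4[3(a₀ ± a₁‖T‖)² + a₀²]·‖ψ‖². -/
theorem stmt_6 {H : Type*} [NormedAddCommGroup H] [InnerProductSpace ℂ H]
    (c : Fin 4 → (H →ₗ[ℂ] H))
    (hrel : ∀ i j : Fin 4, c i ∘ₗ c j + c j ∘ₗ c i
      = if i = j then (-2 : ℂ) • (LinearMap.id : H →ₗ[ℂ] H) else 0)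
    (hskew : ∀ (i : Fin 4) (φ ψ : H), (inner ℂ (c i φ) ψ : ℂ) = -(inner ℂ φ (c i ψ) : ℂ))
    (t a₀ a₁ : ℝ) (Top S : H →ₗ[ℂ] H)
    (hTop : Top = ((t : ℝ) : ℂ) • (c 0 ∘ₗ c 1 ∘ₗ c 2))
    (hS : S = ((a₀ : ℝ) : ℂ) • (LinearMap.id : H →ₗ[ℂ] H) + ((a₁ : ℝ) : ℂ) • Top)
    (ε : ℝ) (hε : ε = 1 ∨ ε = -1)
    (ψ : H) (hψ : Top ψ = ((ε * |t| : ℝ) : ℂ) • ψ) :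
    ∑ i : Fin 4, ‖(c i ∘ₗ S + S ∘ₗ c i) ψ‖^2
      = 4 * (3 * (a₀ + ε * a₁ * |t|)^2 + a₀^2) * ‖ψ‖^2 :=
  stmt_6_general c hrel hskew t a₀ a₁ Top S hTop hS ε ψ hψ
end

section
/- For c ∈ [1/2, 3/2], the S-deformed bound (√(6c) − 1)²/16 is greater than or equal to the universal bound (c − 1/2)/4, with equality only at c = 3/2. -/
/-- on [1/2, 3/2] the S-deformed bound dominates the universal bound. -/
theorem stmt_11 :
    (∀ c : ℝ, 1/2 ≤ c → c ≤ 3/2 →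
      (Real.sqrt (6*c) - 1)^2 / 16 ≥ (c - 1/2) / 4) ∧
    (∀ c : ℝ, 1/2 ≤ c → c ≤ 3/2 →
      (Real.sqrt (6*c) - 1)^2 / 16 = (c - 1/2) / 4 → c = 3/2) := by
  constructor
  · intro c h1 h2
    have hnn : (0:ℝ) ≤ 6*c := by linarith
    have hs := Real.sq_sqrt hnn
    nlinarith [sq_nonneg (Real.sqrt (6*c) - 3)]
  · intro c h1 h2 heq
    have hnn : (0:ℝ) ≤ 6*c := by linarith
    have hs := Real.sq_sqrt hnn
    have h3 : Real.sqrt (6*c) = 3 := by nlinarith [sq_nonneg (Real.sqrt (6*c) - 3)]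
    nlinarith [h3, hs]
end
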